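/- In a regular vine, for each edge e = {a,b} of tree T_i, the conditioned sets 𝔠_{e,a} = U_a \ D_e and 𝔠_{e,b} = U_b \ D_e are each singletons, where U_e denotes the complete union of e and D_e = U_a ∩ U_b is the conditioning set. -/
import Mathlib


/-- Objects appearing in a regular vine on `d` elements: the nodes of the first
tree are the elements `1, …, d` (leaves), and an edge `{a, b}` of tree `T_i`
(which is a node of tree `T_{i+1}`) is represented by `pair a b`. -/
inductive VObj (d : ℕ) where
  | leaf : Fin d → VObj d
  | pair : VObj d → VObj d → VObj d
deriving DecidableEq

namespace VObj

/-- The two endpoints `{a, b}` of an edge `pair a b` (as a set of nodes). -/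
def endpoints {d : ℕ} : VObj d → Finset (VObj d)
  | leaf _ => ∅
  | pair a b => {a, b}

/-- The complete union `U_e ⊆ {1, …, d}` of a node/edge of a regular vine:
all elements reachable through a membership chain `m ∈ e₁ ∈ e₂ ∈ ⋯ ∈ e`. -/
def completeUnion {d : ℕ} : VObj d → Finset (Fin d)
  | leaf i => {i}
  | pair a b => completeUnion a ∪ completeUnion b

end VObj

/-- `(N, E)` is a tree with node set `N` and edge set `E`: every edge joins two
distinct nodes, the graph is connected, and `|E| = |N| − 1`. -/
def IsTreeOn {d : ℕ} (N E : Finset (VObj d)) : Prop :=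
  (∀ e ∈ E, ∃ a ∈ N, ∃ b ∈ N, a ≠ b ∧ e = VObj.pair a b) ∧
  (∀ x ∈ N, ∀ y ∈ N,
    Relation.ReflTransGen
      (fun u v => ∃ e ∈ E, VObj.endpoints e = {u, v} ∧ u ≠ v) x y) ∧
  E.card = N.card - 1

/-- A regular vine `V = (T₁, …, T_{d−1})` on `d` elements: `T₁` is a tree on
the node set `{1, …, d}`; for `i ≥ 2`, `T_i` is a tree whose node set is the
edge set of `T_{i−1}`; and the proximity condition holds: two edges of
`T_{i−1}` joined by an edge of `T_i` share exactly one common node. -/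
structure RegularVine (d : ℕ) where
  N : ℕ → Finset (VObj d)
  E : ℕ → Finset (VObj d)
  first : N 1 = Finset.univ.image VObj.leaf
  trees : ∀ i, 1 ≤ i → i ≤ d - 1 → IsTreeOn (N i) (E i)
  nodes_eq : ∀ i, 2 ≤ i → i ≤ d - 1 → N i = E (i - 1)
  prox : ∀ i, 2 ≤ i → i ≤ d - 1 → ∀ e ∈ E i, ∀ a b : VObj d,
    e = VObj.pair a b → (VObj.endpoints a ∩ VObj.endpoints b).card = 1


section AuxVine
open VObj Finset

lemma tree_bound {d : ℕ} (F : VObj d → Finset (Fin d)) :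
    ∀ (N : Finset (VObj d)) (E : Finset (VObj d)),
    (∀ e ∈ E, ∃ a ∈ N, ∃ b ∈ N, a ≠ b ∧ e = VObj.pair a b) →
    (∀ x ∈ N, ∀ y ∈ N, Relation.ReflTransGen
      (fun u v => ∃ e ∈ E, VObj.endpoints e = {u, v} ∧ u ≠ v) x y) →
    E.card = N.card - 1 →
    (∀ e ∈ E, ∀ p q, e = VObj.pair p q →
      (F p \ F q).card ≤ 1 ∧ (F q \ F p).card ≤ 1) →
    ∀ a b, VObj.pair a b ∈ E → F a = F b →
    (N.biUnion F).card ≤ (F a).card + N.card - 2 := by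
  intro N
  induction N using Finset.strongInductionOn with
  | _ N IH =>
  intro E hH1 hH2 hH3 hHW a b he0 hFab
  -- a, b ∈ N, a ≠ b
  obtain ⟨a', ha', b', hb', hab', heq⟩ := hH1 _ he0
  rw [VObj.pair.injEq] at heq
  obtain ⟨rfl, rfl⟩ := heq
  have habN : ({a, b} : Finset (VObj d)) ⊆ N := by
    intro x hx; simp at hx; rcases hx with rfl | rfl <;> assumption
  have hcard2 : 2 ≤ N.card := by
    calc 2 = ({a, b} : Finset (VObj d)).card := (Finset.card_pair hab').symm
    _ ≤ N.card := Finset.card_le_card habN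
  rcases eq_or_lt_of_le hcard2 with hN2 | hN3
  · -- base case : N = {a, b}
    have hNab : N = {a, b} := (Finset.eq_of_subset_of_card_le habN (by rw [Finset.card_pair hab']; omega)).symm
    subst hNab
    have : ({a, b} : Finset (VObj d)).biUnion F = F a := by
      rw [Finset.biUnion_insert, Finset.singleton_biUnion, hFab, Finset.union_self]
    rw [this, ← hN2]
    omega
  · -- N.card ≥ 3 : find a leaf ℓ ∉ {a, b}
    set r := (fun u v => ∃ e ∈ E, VObj.endpoints e = {u, v} ∧ u ≠ v) with hr
    set deg := (fun v => (E.filter (fun e => v ∈ VObj.endpoints e)).card) with hdeg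
    have hdeg1 : ∀ v ∈ N, 1 ≤ deg v := by
      intro v hv
      obtain ⟨w, hw, hwv⟩ := Finset.exists_mem_ne (show 1 < N.card by omega) v
      rcases (hH2 v hv w hw).cases_head with h | ⟨z, ⟨e, heE, hend, hne⟩, _⟩
      · exact absurd h.symm hwv
      · have : e ∈ E.filter (fun e => v ∈ VObj.endpoints e) :=
          Finset.mem_filter.mpr ⟨heE, by rw [hend]; simp⟩
        exact Finset.card_pos.mpr ⟨e, this⟩
    have hsum : ∑ v ∈ N, deg v = 2 * E.card := by
      have hdf : ∀ v, deg v = ∑ e ∈ E, if v ∈ VObj.endpoints e then 1 else 0 := by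
        intro v; rw [hdeg]; exact Finset.card_filter _ _
      simp only [hdf]
      rw [Finset.sum_comm]
      have h2 : ∀ e ∈ E, (∑ v ∈ N, if v ∈ VObj.endpoints e then 1 else 0) = 2 := by
        intro e heE
        obtain ⟨p, hp, q, hq, hpq, rfl⟩ := hH1 _ heE
        rw [← Finset.card_filter]
        have : N.filter (fun v => v ∈ VObj.endpoints (VObj.pair p q)) = {p, q} := by
          show N.filter (fun v => v ∈ ({p, q} : Finset (VObj d))) = {p, q}
          rw [Finset.filter_mem_eq_inter, Finset.inter_eq_right.mpr]
          intro x hx; simp at hx; rcases hx with rfl | rfl <;> assumption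
        rw [this, Finset.card_pair hpq]
      rw [Finset.sum_congr rfl h2, Finset.sum_const, smul_eq_mul, mul_comm]
    have hnotboth : ¬ (deg a = 1 ∧ deg b = 1) := by
      rintro ⟨hda, hdb⟩
      have key : ∀ y, Relation.ReflTransGen r a y → y = a ∨ y = b := by
        intro y hy
        induction hy with
        | refl => left; rfl
        | @tail z y' h1 h2 ih =>
          obtain ⟨e, heE, hend, hne⟩ := h2
          have hy'e : y' ∈ VObj.endpoints e := by rw [hend]; simp
          rcases ih with h | h
          · rw [h] at hend
            have he' : e ∈ E.filter (fun e' => a ∈ VObj.endpoints e') :=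
              Finset.mem_filter.mpr ⟨heE, by rw [hend]; simp⟩
            have he0' : VObj.pair a b ∈ E.filter (fun e' => a ∈ VObj.endpoints e') :=
              Finset.mem_filter.mpr ⟨he0, by show a ∈ ({a, b} : Finset (VObj d)); simp⟩
            have heq : e = VObj.pair a b := Finset.card_le_one.mp (le_of_eq hda) _ he' _ he0'
            rw [heq] at hy'e
            have hy2 : y' ∈ ({a, b} : Finset (VObj d)) := hy'e
            simpa using hy2
          · rw [h] at hend
            have he' : e ∈ E.filter (fun e' => b ∈ VObj.endpoints e') :=
              Finset.mem_filter.mpr ⟨heE, by rw [hend]; simp⟩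
            have he0' : VObj.pair a b ∈ E.filter (fun e' => b ∈ VObj.endpoints e') :=
              Finset.mem_filter.mpr ⟨he0, by show b ∈ ({a, b} : Finset (VObj d)); simp⟩
            have heq : e = VObj.pair a b := Finset.card_le_one.mp (le_of_eq hdb) _ he' _ he0'
            rw [heq] at hy'e
            have hy2 : y' ∈ ({a, b} : Finset (VObj d)) := hy'e
            simpa using hy2
      have hthird : ∃ x ∈ N, x ≠ a ∧ x ≠ b := by
        by_contra hcon
        push_neg at hcon
        have hsub : N ⊆ {a, b} := by
          intro x hx
          rcases eq_or_ne x a with rfl | hxa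
          · simp
          · have := hcon x hx hxa; subst this; simp
        have := Finset.card_le_card hsub
        rw [Finset.card_pair hab'] at this
        omega
      obtain ⟨x, hx, hxa, hxb⟩ := hthird
      rcases key x (hH2 a ha' x hx) with rfl | rfl
      · exact hxa rfl
      · exact hxb rfl
    have hleaf : ∃ ℓ ∈ N, deg ℓ = 1 ∧ ℓ ≠ a ∧ ℓ ≠ b := by
      by_contra hcon
      have hdeg2 : ∀ v ∈ N \ {a, b}, 2 ≤ deg v := by
        intro v hv
        rw [Finset.mem_sdiff] at hv
        obtain ⟨hvN, hvab⟩ := hv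
        have hva : v ≠ a := by intro h; subst h; exact hvab (by simp)
        have hvb : v ≠ b := by intro h; subst h; exact hvab (by simp)
        have h1 := hdeg1 v hvN
        by_contra h
        push_neg at h
        exact hcon ⟨v, hvN, by omega, hva, hvb⟩
      have hsplit : ∑ v ∈ N \ {a, b}, deg v + ∑ v ∈ ({a, b} : Finset (VObj d)), deg v
          = ∑ v ∈ N, deg v := Finset.sum_sdiff habN
      have hsab : ∑ v ∈ ({a, b} : Finset (VObj d)), deg v = deg a + deg b :=
        Finset.sum_pair hab'
      have hlow : 2 * (N.card - 2) ≤ ∑ v ∈ N \ {a, b}, deg v := by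
        have hcs : (N \ {a, b}).card = N.card - 2 := by
          rw [Finset.card_sdiff_of_subset habN, Finset.card_pair hab']
        calc 2 * (N.card - 2) = ∑ _v ∈ N \ {a, b}, 2 := by
              rw [Finset.sum_const, smul_eq_mul, hcs, mul_comm]
          _ ≤ ∑ v ∈ N \ {a, b}, deg v := Finset.sum_le_sum hdeg2
      have hda1 : 1 ≤ deg a := hdeg1 a ha'
      have hdb1 : 1 ≤ deg b := hdeg1 b hb'
      have hda2 : 3 ≤ deg a + deg b := by
        rcases Nat.lt_or_ge (deg a + deg b) 3 with h | h
        · exact absurd ⟨by omega, by omega⟩ hnotboth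
        · exact h
      rw [hsum, hH3] at hsplit
      omega
    obtain ⟨ℓ, hℓN, hdegℓ, hℓa, hℓb⟩ := hleaf
    -- the unique edge at ℓ
    obtain ⟨f, hf⟩ := Finset.card_eq_one.mp hdegℓ
    have hfmem : f ∈ E.filter (fun e => ℓ ∈ VObj.endpoints e) := by rw [hf]; simp
    have hfE : f ∈ E := (Finset.mem_filter.mp hfmem).1
    have hℓf : ℓ ∈ VObj.endpoints f := (Finset.mem_filter.mp hfmem).2
    have huniq : ∀ g ∈ E, ℓ ∈ VObj.endpoints g → g = f := by
      intro g hg hlg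
      have : g ∈ E.filter (fun e => ℓ ∈ VObj.endpoints e) := Finset.mem_filter.mpr ⟨hg, hlg⟩
      rw [hf] at this; simpa using this
    obtain ⟨p, hpN, q, hqN, hpq, hfpq⟩ := hH1 _ hfE
    have hℓpq : ℓ = p ∨ ℓ = q := by
      rw [hfpq] at hℓf
      have : ℓ ∈ ({p, q} : Finset (VObj d)) := hℓf
      simpa using this
    obtain ⟨u, huN, hℓu, hendf, hWlu⟩ :
        ∃ u, u ∈ N ∧ ℓ ≠ u ∧ VObj.endpoints f = {ℓ, u} ∧ (F ℓ \ F u).card ≤ 1 := by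
      rcases hℓpq with rfl | rfl
      · exact ⟨q, hqN, hpq, by rw [hfpq]; rfl, (hHW f hfE _ _ hfpq).1⟩
      · refine ⟨p, hpN, fun h => hpq h.symm, ?_, (hHW f hfE _ _ hfpq).2⟩
        rw [hfpq]
        show ({p, ℓ} : Finset (VObj d)) = {ℓ, p}
        exact Finset.pair_comm p ℓ
    set N' := N.erase ℓ with hN'
    set E' := E.erase f with hE'
    set r' := (fun u v => ∃ e ∈ E', VObj.endpoints e = {u, v} ∧ u ≠ v) with hr'
    have huN' : u ∈ N' := Finset.mem_erase.mpr ⟨fun h => hℓu h.symm, huN⟩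
    have haN' : a ∈ N' := Finset.mem_erase.mpr ⟨fun h => hℓa h.symm, ha'⟩
    have hbN' : b ∈ N' := Finset.mem_erase.mpr ⟨fun h => hℓb h.symm, hb'⟩
    have hH1' : ∀ e ∈ E', ∃ x ∈ N', ∃ y ∈ N', x ≠ y ∧ e = VObj.pair x y := by
      intro e he
      obtain ⟨hef, heE⟩ := Finset.mem_erase.mp he
      obtain ⟨x, hx, y, hy, hxy, rfl⟩ := hH1 _ heE
      have hxl : x ≠ ℓ := by
        rintro rfl
        exact hef (huniq _ heE (by show x ∈ ({x, y} : Finset (VObj d)); simp))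
      have hyl : y ≠ ℓ := by
        rintro rfl
        exact hef (huniq _ heE (by show y ∈ ({x, y} : Finset (VObj d)); simp))
      exact ⟨x, Finset.mem_erase.mpr ⟨hxl, hx⟩, y, Finset.mem_erase.mpr ⟨hyl, hy⟩, hxy, rfl⟩
    have hH3' : E'.card = N'.card - 1 := by
      rw [hE', hN', Finset.card_erase_of_mem hfE, Finset.card_erase_of_mem hℓN]
      omega
    have hstep : ∀ x, x ≠ ℓ → ∀ y, Relation.ReflTransGen r x y →
        (y ≠ ℓ → Relation.ReflTransGen r' x y) ∧ (y = ℓ → Relation.ReflTransGen r' x u) := by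
      intro x hxl y hy
      induction hy with
      | refl => exact ⟨fun _ => .refl, fun h => absurd h hxl⟩
      | @tail z y' h1 h2 ih =>
        obtain ⟨e, heE, hend, hne⟩ := h2
        by_cases hyl : y' = ℓ
        · have hef : e = f := huniq _ heE (by rw [hend, hyl]; simp)
          have hzl : z ≠ ℓ := fun h => hne (h.trans hyl.symm)
          have hz : z = u := by
            rw [hef, hendf] at hend
            have hz2 : z ∈ ({ℓ, u} : Finset (VObj d)) := by rw [hend]; simp
            simp at hz2
            rcases hz2 with rfl | rfl
            · exact absurd rfl hzl
            · rfl
          exact ⟨fun h => absurd hyl h, fun _ => hz ▸ ih.1 hzl⟩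
        · by_cases hzl : z = ℓ
          · have hef : e = f := huniq _ heE (by rw [hend, hzl]; simp)
            have hyu : y' = u := by
              rw [hef, hendf, hzl] at hend
              have hy2 : y' ∈ ({ℓ, u} : Finset (VObj d)) := by rw [hend]; simp
              simp at hy2
              rcases hy2 with rfl | rfl
              · exact absurd rfl hyl
              · rfl
            exact ⟨fun _ => hyu ▸ ih.2 hzl, fun h => absurd h hyl⟩
          · have hef : e ≠ f := by
              intro h
              rw [h, hendf] at hend
              have : ℓ ∈ ({z, y'} : Finset (VObj d)) := by rw [← hend]; simp
              simp at this
              rcases this with rfl | rfl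
              · exact hzl rfl
              · exact hyl rfl
            refine ⟨fun _ => (ih.1 hzl).tail ⟨e, Finset.mem_erase.mpr ⟨hef, heE⟩, hend, hne⟩,
              fun h => absurd h hyl⟩
    have hH2' : ∀ x ∈ N', ∀ y ∈ N', Relation.ReflTransGen r' x y := by
      intro x hx y hy
      obtain ⟨hxl, hxN⟩ := Finset.mem_erase.mp hx
      obtain ⟨hyl, hyN⟩ := Finset.mem_erase.mp hy
      exact (hstep x hxl y (hH2 x hxN y hyN)).1 hyl
    have he0' : VObj.pair a b ∈ E' := by
      refine Finset.mem_erase.mpr ⟨?_, he0⟩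
      intro h
      rw [← h] at hℓf
      have : ℓ ∈ ({a, b} : Finset (VObj d)) := hℓf
      simp at this
      rcases this with rfl | rfl
      · exact hℓa rfl
      · exact hℓb rfl
    have hHW' : ∀ e ∈ E', ∀ p q, e = VObj.pair p q →
        (F p \ F q).card ≤ 1 ∧ (F q \ F p).card ≤ 1 :=
      fun e he => hHW e (Finset.mem_of_mem_erase he)
    have hIH := IH N' (Finset.erase_ssubset hℓN) E' hH1' hH2' hH3' hHW' a b he0' hFab
    have hNsplit : N = insert ℓ N' := (Finset.insert_erase hℓN).symm
    have hbu : N.biUnion F = F ℓ ∪ N'.biUnion F := by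
      conv_lhs => rw [hNsplit]
      rw [Finset.biUnion_insert]
    have hsub : F ℓ \ (N'.biUnion F) ⊆ F ℓ \ F u :=
      Finset.sdiff_subset_sdiff (Finset.Subset.refl _) (Finset.subset_biUnion_of_mem F huN')
    have hb1 : (F ℓ \ N'.biUnion F).card ≤ 1 := le_trans (Finset.card_le_card hsub) hWlu
    have hcard : (N.biUnion F).card ≤ (N'.biUnion F).card + 1 := by
      rw [hbu, ← Finset.card_sdiff_add_card]
      omega
    have hN'card : N'.card = N.card - 1 := Finset.card_erase_of_mem hℓN
    omega

lemma cu_pair {d : ℕ} (a b : VObj d) :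
    completeUnion (pair a b) = completeUnion a ∪ completeUnion b := rfl

lemma endpoints_pair {d : ℕ} (a b : VObj d) :
    endpoints (pair a b) = {a, b} := rfl


lemma vine_invariants {d : ℕ} (hd : 2 ≤ d) (V : RegularVine d) :
    ∀ i, 1 ≤ i → i ≤ d - 1 →
    ((V.N i).card = d + 1 - i) ∧
    (∀ v ∈ V.N i, (completeUnion v).card = i) ∧
    ((V.N i).biUnion completeUnion = Finset.univ) ∧
    (∀ e ∈ V.E i, ∀ a b, e = VObj.pair a b →
      (completeUnion a \ completeUnion b).card = 1 ∧
      (completeUnion b \ completeUnion a).card = 1) := by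
  intro i
  induction i using Nat.strong_induction_on with
  | _ i IH =>
  intro h1 h2
  rcases eq_or_lt_of_le h1 with h1' | h2i
  · -- i = 1
    subst h1'
    have hinj : Function.Injective (VObj.leaf (d := d)) := by
      intro x y h; cases h; rfl
    refine ⟨?_, ?_, ?_, ?_⟩
    · rw [V.first, Finset.card_image_of_injective _ hinj, Finset.card_univ,
        Fintype.card_fin]
      omega
    · intro v hv
      rw [V.first, Finset.mem_image] at hv
      obtain ⟨j, _, rfl⟩ := hv
      rfl
    · apply Finset.eq_univ_of_forall
      intro j
      rw [Finset.mem_biUnion]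
      exact ⟨VObj.leaf j,
        by rw [V.first]; exact Finset.mem_image_of_mem _ (Finset.mem_univ j),
        by simp [completeUnion]⟩
    · intro e he a b heab
      obtain ⟨a', haN, b', hbN, hab', heq⟩ := (V.trees 1 le_rfl h2).1 _ he
      rw [heab, VObj.pair.injEq] at heq
      obtain ⟨rfl, rfl⟩ := heq
      rw [V.first, Finset.mem_image] at haN hbN
      obtain ⟨x, _, rfl⟩ := haN
      obtain ⟨y, _, rfl⟩ := hbN
      have hxy : x ≠ y := fun h => hab' (by rw [h])
      have h1 : completeUnion (VObj.leaf x) \ completeUnion (VObj.leaf y) = {x} := by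
        show ({x} : Finset (Fin d)) \ {y} = {x}
        ext z
        simp only [Finset.mem_sdiff, Finset.mem_singleton]
        constructor
        · exact fun h => h.1
        · rintro rfl; exact ⟨rfl, hxy⟩
      have h2 : completeUnion (VObj.leaf y) \ completeUnion (VObj.leaf x) = {y} := by
        show ({y} : Finset (Fin d)) \ {x} = {y}
        ext z
        simp only [Finset.mem_sdiff, Finset.mem_singleton]
        constructor
        · exact fun h => h.1
        · rintro rfl; exact ⟨rfl, fun h => hxy h.symm⟩
      rw [h1, h2]
      exact ⟨Finset.card_singleton x, Finset.card_singleton y⟩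
  · -- 2 ≤ i
    obtain ⟨IHcard, IHA, IHcov, IHC⟩ := IH (i - 1) (by omega) (by omega) (by omega)
    have hNE : V.N i = V.E (i - 1) := V.nodes_eq i h2i h2
    obtain ⟨T1p, T2p, T3p⟩ := V.trees (i - 1) (by omega) (by omega)
    obtain ⟨T1, T2, T3⟩ := V.trees i h1 h2
    have hCard : (V.N i).card = d + 1 - i := by
      rw [hNE, T3p, IHcard]; omega
    have hA : ∀ v ∈ V.N i, (completeUnion v).card = i := by
      intro v hv
      rw [hNE] at hv
      obtain ⟨v1, hv1, v2, hv2, hv12, rfl⟩ := T1p _ hv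
      have hC := IHC _ hv _ _ rfl
      rw [cu_pair, ← Finset.card_sdiff_add_card, hC.1, IHA v2 hv2]
      omega
    have hCov : (V.N i).biUnion completeUnion = Finset.univ := by
      apply Finset.eq_univ_of_forall
      intro j
      have hj : j ∈ (V.N (i - 1)).biUnion completeUnion := by
        rw [IHcov]; exact Finset.mem_univ j
      rw [Finset.mem_biUnion] at hj ⊢
      obtain ⟨v, hv, hjv⟩ := hj
      have hcard1 : 1 < (V.N (i - 1)).card := by rw [IHcard]; omega
      obtain ⟨w, hw, hwv⟩ := Finset.exists_mem_ne hcard1 v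
      rcases (T2p v hv w hw).cases_head with heq | ⟨z, ⟨e', he'E, hend, hne⟩, _⟩
      · exact absurd heq.symm hwv
      · obtain ⟨p, hp, q, hq, hpq, rfl⟩ := T1p _ he'E
        refine ⟨_, by rw [hNE]; exact he'E, ?_⟩
        have hv2 : v ∈ ({p, q} : Finset (VObj d)) := by
          rw [← endpoints_pair, hend]; simp
        rw [cu_pair, Finset.mem_union]
        simp only [Finset.mem_insert, Finset.mem_singleton] at hv2
        rcases hv2 with rfl | rfl
        · left; exact hjv
        · right; exact hjv
    have hhalf : ∀ a ∈ V.N i, ∀ b ∈ V.N i, ∀ c, c ∈ endpoints a → c ∈ endpoints b →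
        (completeUnion a \ completeUnion b).card ≤ 1 := by
      intro a ha b hb c hca hcb
      rw [hNE] at ha hb
      obtain ⟨a1, ha1, a2, ha2, ha12, rfl⟩ := T1p _ ha
      have hCa := IHC _ ha _ _ rfl
      obtain ⟨b1, hb1, b2, hb2, hb12, rfl⟩ := T1p _ hb
      have hcb' : completeUnion c ⊆ completeUnion (pair b1 b2) := by
        have hcb2 : c ∈ ({b1, b2} : Finset (VObj d)) := hcb
        simp only [Finset.mem_insert, Finset.mem_singleton] at hcb2
        rcases hcb2 with rfl | rfl
        · rw [cu_pair]; exact Finset.subset_union_left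
        · rw [cu_pair]; exact Finset.subset_union_right
      have hsub : completeUnion (pair a1 a2) \ completeUnion (pair b1 b2)
          ⊆ completeUnion (pair a1 a2) \ completeUnion c :=
        Finset.sdiff_subset_sdiff (Finset.Subset.refl _) hcb'
      have hca2 : c ∈ ({a1, a2} : Finset (VObj d)) := hca
      simp only [Finset.mem_insert, Finset.mem_singleton] at hca2
      have hkey : (completeUnion (pair a1 a2) \ completeUnion c).card ≤ 1 := by
        rcases hca2 with rfl | rfl
        · rw [cu_pair, Finset.union_sdiff_left]
          exact le_of_eq hCa.2
        · rw [cu_pair, Finset.union_sdiff_right]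
          exact le_of_eq hCa.1
      exact le_trans (Finset.card_le_card hsub) hkey
    have hW : ∀ e ∈ V.E i, ∀ a b, e = VObj.pair a b →
        (completeUnion a \ completeUnion b).card ≤ 1 ∧
        (completeUnion b \ completeUnion a).card ≤ 1 := by
      intro e he a b heab
      obtain ⟨a', haN, b', hbN, hab', heq⟩ := T1 _ he
      rw [heab, VObj.pair.injEq] at heq
      obtain ⟨rfl, rfl⟩ := heq
      have hprox := V.prox i h2i h2 e he _ _ heab
      obtain ⟨c, hc⟩ := Finset.card_eq_one.mp hprox
      have hcmem : c ∈ endpoints a ∩ endpoints b := by rw [hc]; simp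
      rw [Finset.mem_inter] at hcmem
      exact ⟨hhalf _ haN _ hbN c hcmem.1 hcmem.2,
        hhalf _ hbN _ haN c hcmem.2 hcmem.1⟩
    have hC : ∀ e ∈ V.E i, ∀ a b, e = VObj.pair a b →
        (completeUnion a \ completeUnion b).card = 1 ∧
        (completeUnion b \ completeUnion a).card = 1 := by
      intro e he a b heab
      obtain ⟨a', haN, b', hbN, hab', heq⟩ := T1 _ he
      rw [heab, VObj.pair.injEq] at heq
      obtain ⟨rfl, rfl⟩ := heq
      have hca : (completeUnion a).card = i := hA _ haN
      have hcb : (completeUnion b).card = i := hA _ hbN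
      have hWe := hW e he _ _ heab
      have hne : completeUnion a ≠ completeUnion b := by
        intro hEq
        have hbd := tree_bound completeUnion (V.N i) (V.E i) T1 T2 T3 hW
          a b (by rw [← heab]; exact he) hEq
        rw [hCov, Finset.card_univ, Fintype.card_fin, hca, hCard] at hbd
        omega
      constructor
      · have hne1 : completeUnion a \ completeUnion b ≠ ∅ := by
          intro hemp
          exact hne (Finset.eq_of_subset_of_card_le
            (Finset.sdiff_eq_empty_iff_subset.mp hemp) (by rw [hca, hcb]))
        have := Finset.card_pos.mpr (Finset.nonempty_iff_ne_empty.mpr hne1)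
        omega
      · have hne1 : completeUnion b \ completeUnion a ≠ ∅ := by
          intro hemp
          exact hne (Finset.eq_of_subset_of_card_le
            (Finset.sdiff_eq_empty_iff_subset.mp hemp) (by rw [hca, hcb])).symm
        have := Finset.card_pos.mpr (Finset.nonempty_iff_ne_empty.mpr hne1)
        omega
    exact ⟨hCard, hA, hCov, hC⟩

end AuxVine

/-- **Conditioned sets are singletons.** In a regular vine, for each edge
`e = {a, b}` of tree `T_i`, with conditioning set `D_e = U_a ∩ U_b`, the
conditioned sets `U_a \ D_e` and `U_b \ D_e` are singletons. -/
theorem regularVine_conditioned_sets_singleton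
    {d : ℕ} (hd : 2 ≤ d) (V : RegularVine d)
    (i : ℕ) (h1 : 1 ≤ i) (h2 : i ≤ d - 1)
    (e : VObj d) (he : e ∈ V.E i) (a b : VObj d) (hab : e = VObj.pair a b) :
    (VObj.completeUnion a \ (VObj.completeUnion a ∩ VObj.completeUnion b)).card = 1 ∧
    (VObj.completeUnion b \ (VObj.completeUnion a ∩ VObj.completeUnion b)).card = 1 := by
  have hC := (vine_invariants hd V i h1 h2).2.2.2 e he a b hab
  have hrw1 : VObj.completeUnion a \ (VObj.completeUnion a ∩ VObj.completeUnion b)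
      = VObj.completeUnion a \ VObj.completeUnion b := by
    ext z; simp only [Finset.mem_sdiff, Finset.mem_inter]; tauto
  have hrw2 : VObj.completeUnion b \ (VObj.completeUnion a ∩ VObj.completeUnion b)
      = VObj.completeUnion b \ VObj.completeUnion a := by
    ext z; simp only [Finset.mem_sdiff, Finset.mem_inter]; tauto
  rw [hrw1, hrw2]
  exact hC
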